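/- Medvedev's logic has the disjunction property: if φ ∨ ψ is valid in every Medvedev frame M_k under every Kripke valuation, then either φ is valid in all M_k or ψ is valid in all M_k. -/

import Mathlib

inductive Fml : Type where
  | atom : ℕ → Fml
  | bot  : Fml
  | and  : Fml → Fml → Fml
  | or   : Fml → Fml → Fml
  | imp  : Fml → Fml → Fml
deriving DecidableEq

/-- Intuitionistic negation: ¬φ := φ → ⊥. -/
def Fml.neg (φ : Fml) : Fml := .imp φ .bot

/-- Biconditional. -/
def Fml.iff (φ ψ : Fml) : Fml := .and (.imp φ ψ) (.imp ψ φ)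

/-- Disjunction of a list of formulas (empty disjunction is ⊥). -/
def disj : List Fml → Fml
  | [] => .bot
  | [φ] => φ
  | φ :: l => .or φ (disj l)

/-- Conjunction of a list of formulas (empty conjunction is ¬⊥). -/
def conj : List Fml → Fml
  | [] => Fml.neg .bot
  | [φ] => φ
  | φ :: l => .and φ (conj l)

/-- Substitution, extended homomorphically. -/
def Fml.subst (σ : ℕ → Fml) : Fml → Fml
  | .atom p => σ p
  | .bot => .bot
  | .and φ ψ => .and (φ.subst σ) (ψ.subst σ)
  | .or φ ψ => .or (φ.subst σ) (ψ.subst σ)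
  | .imp φ ψ => .imp (φ.subst σ) (ψ.subst σ)

/-- Hilbert-style provability for intuitionistic logic plus extra axioms `Ax`. -/
inductive Prov (Ax : Fml → Prop) : Fml → Prop where
  | ax {φ} : Ax φ → Prov Ax φ
  | k {φ ψ} : Prov Ax (.imp φ (.imp ψ φ))
  | s {φ ψ χ} : Prov Ax (.imp (.imp φ (.imp ψ χ)) (.imp (.imp φ ψ) (.imp φ χ)))
  | andI {φ ψ} : Prov Ax (.imp φ (.imp ψ (.and φ ψ)))
  | andE₁ {φ ψ} : Prov Ax (.imp (.and φ ψ) φ)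
  | andE₂ {φ ψ} : Prov Ax (.imp (.and φ ψ) ψ)
  | orI₁ {φ ψ} : Prov Ax (.imp φ (.or φ ψ))
  | orI₂ {φ ψ} : Prov Ax (.imp ψ (.or φ ψ))
  | orE {φ ψ χ} : Prov Ax (.imp (.imp φ χ) (.imp (.imp ψ χ) (.imp (.or φ ψ) χ)))
  | exfalso {φ} : Prov Ax (.imp .bot φ)
  | mp {φ ψ} : Prov Ax (.imp φ ψ) → Prov Ax φ → Prov Ax ψ

/-- No extra axioms: pure intuitionistic logic is `Prov NoAx`. -/
def NoAx : Fml → Prop := fun _ => False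

/-- Instances of the weak Kreisel–Putnam axiom schema. -/
def wKPAx : Fml → Prop := fun φ =>
  ∃ a b c : Fml, φ = .imp (.imp a.neg (.or b.neg c.neg))
    (.or (.imp a.neg b.neg) (.imp a.neg c.neg))

/-- Intuitionistic Kripke forcing over a preordered set of worlds. -/
def Force {W : Type} [Preorder W] (V : W → ℕ → Prop) : W → Fml → Prop
  | w, .atom p => V w p
  | _, .bot => False
  | w, .and φ ψ => Force V w φ ∧ Force V w ψ
  | w, .or φ ψ => Force V w φ ∨ Force V w ψ
  | w, .imp φ ψ => ∀ v, w ≤ v → Force V v φ → Force V v ψ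

/-- A valuation is monotone (persistent). -/
def MonoVal {W : Type} [Preorder W] (V : W → ℕ → Prop) : Prop :=
  ∀ ⦃w w'⦄, w ≤ w' → ∀ p, V w p → V w' p

/-- The Medvedev frame `M n`: nonempty subsets of `Fin n` ordered by reverse inclusion. -/
def Med (n : ℕ) : Type := {I : Finset (Fin n) // I.Nonempty}

instance {n : ℕ} : PartialOrder (Med n) where
  le I J := J.1 ⊆ I.1
  le_refl I := Finset.Subset.refl _
  le_trans I J K h h' := Finset.Subset.trans h' h
  le_antisymm I J h h' := Subtype.ext (Finset.Subset.antisymm h' h)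

instance {n : ℕ} : DecidableEq (Med n) := Subtype.instDecidableEq

/-- Validity on the Medvedev frame `M n`. -/
def MedValid (n : ℕ) (φ : Fml) : Prop :=
  ∀ V : Med n → ℕ → Prop, MonoVal V → ∀ w, Force V w φ

/-- Medvedev's logic of finite problems. -/
def ML (φ : Fml) : Prop := ∀ n, MedValid n φ

/-- The singleton world `{i}` of `M n`. -/
def single {n : ℕ} (i : Fin n) : Med n := ⟨{i}, Finset.singleton_nonempty i⟩

/-- Exponentiation on ℕ∞ (anything involving ∞ gives ∞). -/
def epow : ℕ∞ → ℕ∞ → ℕ∞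
  | some a, some b => some (a ^ b)
  | _, _ => ⊤

/-- Kreisel–Putnam rank. -/
def rank : Fml → ℕ∞
  | .imp _ .bot => 1
  | .or φ ψ => rank φ + rank ψ
  | .and φ ψ => rank φ * rank ψ
  | .imp φ ψ => epow (rank ψ) (rank φ)
  | _ => ⊤

/-- Disjunction of `α i` over a finite index set. -/
noncomputable def bigOrOn {n : ℕ} (α : Fin n → Fml) (I : Finset (Fin n)) : Fml :=
  disj (I.toList.map α)

/-- `α_I := ¬¬⋁_{i ∈ I} α_i`. -/
noncomputable def alphaF {n : ℕ} (α : Fin n → Fml) (I : Finset (Fin n)) : Fml :=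
  Fml.neg (Fml.neg (bigOrOn α I))

/-!
Given a valuation on `M a` refuting `φ` at `w₁` and one on `M b` refuting `ψ` at `w₂`, place
`M a` and `M b` in `M (a + b)` as disjoint generated subframes via the index embeddings
`Fin a ↪ Fin (a + b)` and `Fin b ↪ Fin (a + b)`, and glue the two valuations. Forcing inside a
generated subframe only depends on the subframe, so the images of `w₁` and `w₂` still refute
`φ` and `ψ`; their union is a world below both, which by persistence forces neither `φ` nor `ψ`.
-/

section Kripke

variable {W W' : Type} [Preorder W] [Preorder W']

theorem Force.mono {V : W → ℕ → Prop} (hV : MonoVal V) :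
    ∀ (χ : Fml) {w w' : W}, w ≤ w' → Force V w χ → Force V w' χ
  | .atom p, _, _, h, hf => hV h p hf
  | .bot, _, _, _, hf => hf
  | .and χ₁ χ₂, _, _, h, hf => ⟨Force.mono hV χ₁ h hf.1, Force.mono hV χ₂ h hf.2⟩
  | .or χ₁ χ₂, _, _, h, hf => hf.imp (Force.mono hV χ₁ h) (Force.mono hV χ₂ h)
  | .imp _ _, _, _, h, hf => fun v hv => hf v (h.trans hv)

theorem MonoVal.or {V V' : W → ℕ → Prop} (hV : MonoVal V) (hV' : MonoVal V') :
    MonoVal (fun w p => V w p ∨ V' w p) :=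
  fun _ _ h p hp => hp.imp (hV h p) (hV' h p)

/-- Forcing is preserved by bounded morphisms (monotone maps with the back condition). -/
theorem force_comp_iff (f : W → W') (hf : Monotone f)
    (hback : ∀ w v, f w ≤ v → ∃ u, w ≤ u ∧ f u = v) (V : W' → ℕ → Prop) :
    ∀ (χ : Fml) (w : W), Force V (f w) χ ↔ Force (fun u => V (f u)) w χ
  | .atom _, _ => Iff.rfl
  | .bot, _ => Iff.rfl
  | .and χ₁ χ₂, w =>
      and_congr (force_comp_iff f hf hback V χ₁ w) (force_comp_iff f hf hback V χ₂ w)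
  | .or χ₁ χ₂, w =>
      or_congr (force_comp_iff f hf hback V χ₁ w) (force_comp_iff f hf hback V χ₂ w)
  | .imp χ₁ χ₂, w => by
      constructor
      · intro hforce u hwu hu
        exact (force_comp_iff f hf hback V χ₂ u).1
          (hforce (f u) (hf hwu) ((force_comp_iff f hf hback V χ₁ u).2 hu))
      · intro hforce v hwv hv
        obtain ⟨u, hwu, rfl⟩ := hback w v hwv
        exact (force_comp_iff f hf hback V χ₂ u).2
          (hforce u hwu ((force_comp_iff f hf hback V χ₁ u).1 hv))

end Kripke

namespace Med

variable {a c : ℕ}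

def map (g : Fin a ↪ Fin c) (I : Med a) : Med c := ⟨I.1.map g, I.2.map⟩

theorem map_monotone (g : Fin a ↪ Fin c) : Monotone (map g) :=
  fun _ _ h => Finset.map_subset_map.2 h

theorem map_injective (g : Fin a ↪ Fin c) : Function.Injective (map g) :=
  fun _ _ h => Subtype.ext (Finset.map_injective g (congrArg Subtype.val h))

theorem exists_le_map_eq_of_map_le (g : Fin a ↪ Fin c) (I : Med a) (v : Med c)
    (h : map g I ≤ v) : ∃ J, I ≤ J ∧ map g J = v := by
  obtain ⟨J, hJI, hvJ⟩ := Finset.subset_map_iff.1 (show v.1 ⊆ I.1.map g from h)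
  have hJ : J.Nonempty := Finset.map_nonempty.1 (hvJ ▸ v.2)
  exact ⟨⟨J, hJ⟩, hJI, Subtype.ext hvJ.symm⟩

theorem map_ne_map {b : ℕ} {f : Fin a ↪ Fin c} {g : Fin b ↪ Fin c}
    (hfg : ∀ i j, f i ≠ g j) (I : Med a) (J : Med b) : map f I ≠ map g J := by
  intro h
  obtain ⟨j, hj⟩ := J.2
  have hgj : g j ∈ (map f I).1 := h ▸ Finset.mem_map_of_mem g hj
  obtain ⟨i, -, hij⟩ := Finset.mem_map.1 hgj
  exact hfg i j hij

def pushVal (g : Fin a ↪ Fin c) (V : Med a → ℕ → Prop) (w : Med c) (p : ℕ) : Prop :=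
  ∃ I, map g I = w ∧ V I p

theorem _root_.MonoVal.pushVal {V : Med a → ℕ → Prop} (hV : MonoVal V)
    (g : Fin a ↪ Fin c) : MonoVal (pushVal g V) := by
  rintro _ v hle p ⟨I, rfl, hp⟩
  obtain ⟨J, hIJ, rfl⟩ := exists_le_map_eq_of_map_le g I v hle
  exact ⟨J, rfl, hV hIJ p hp⟩

theorem pushVal_map_iff (g : Fin a ↪ Fin c) (V : Med a → ℕ → Prop) (I : Med a)
    (p : ℕ) : pushVal g V (map g I) p ↔ V I p :=
  ⟨fun ⟨_, hJ, hp⟩ => map_injective g hJ ▸ hp, fun hp => ⟨I, rfl, hp⟩⟩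

theorem not_pushVal_map {b : ℕ} {f : Fin a ↪ Fin c} {g : Fin b ↪ Fin c}
    (hfg : ∀ i j, f i ≠ g j) (V : Med b → ℕ → Prop) (I : Med a) (p : ℕ) :
    ¬pushVal g V (map f I) p :=
  fun ⟨J, hJ, _⟩ => map_ne_map hfg I J hJ.symm

theorem force_map_iff (g : Fin a ↪ Fin c) {V : Med c → ℕ → Prop}
    {V₀ : Med a → ℕ → Prop} (hV : ∀ I p, V (map g I) p ↔ V₀ I p) (χ : Fml) (I : Med a) :
    Force V (map g I) χ ↔ Force V₀ I χ := by
  have hV₀ : (fun J => V (map g J)) = V₀ :=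
    funext fun J => funext fun p => propext (hV J p)
  rw [force_comp_iff (map g) (map_monotone g) (exists_le_map_eq_of_map_le g) V χ I, hV₀]

end Med

open Med in
theorem exists_refutation_of_not_medValid {a b : ℕ} {φ ψ : Fml} (hφ : ¬MedValid a φ)
    (hψ : ¬MedValid b ψ) :
    ∃ V : Med (a + b) → ℕ → Prop, MonoVal V ∧ ∃ w, ¬Force V w φ ∧ ¬Force V w ψ := by
  simp only [MedValid, not_forall] at hφ hψ
  obtain ⟨V₁, hV₁, w₁, hw₁⟩ := hφ
  obtain ⟨V₂, hV₂, w₂, hw₂⟩ := hψ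
  let gL := Fin.castAddEmb (n := a) b
  let gR := Fin.natAddEmb a (m := b)
  have hLR : ∀ i j, gL i ≠ gR j := fun i j h => by
    have hij : (i : ℕ) = a + j := congrArg Fin.val h
    omega
  let V w p := pushVal gL V₁ w p ∨ pushVal gR V₂ w p
  have hVL : ∀ I p, V (map gL I) p ↔ V₁ I p := fun I p => by
    simp only [V, pushVal_map_iff, not_pushVal_map hLR, or_false]
  have hVR : ∀ J p, V (map gR J) p ↔ V₂ J p := fun J p => by
    simp only [V, pushVal_map_iff, not_pushVal_map fun j i h => hLR i j h.symm, false_or]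
  have hV : MonoVal V := (hV₁.pushVal gL).or (hV₂.pushVal gR)
  let w : Med (a + b) :=
    ⟨(map gL w₁).1 ∪ (map gR w₂).1, (map gL w₁).2.mono Finset.subset_union_left⟩
  refine ⟨V, hV, w, fun hwφ => hw₁ ?_, fun hwψ => hw₂ ?_⟩
  · exact (force_map_iff gL hVL φ w₁).1 (hwφ.mono hV φ Finset.subset_union_left)
  · exact (force_map_iff gR hVR ψ w₂).1 (hwψ.mono hV ψ Finset.subset_union_right)

/-- Medvedev's logic has the disjunction property. -/
theorem stmt3 (φ ψ : Fml) (h : ∀ k, MedValid k (.or φ ψ)) :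
    (∀ k, MedValid k φ) ∨ (∀ k, MedValid k ψ) := by
  by_contra hc
  obtain ⟨⟨a, hφ⟩, ⟨b, hψ⟩⟩ := (not_or.1 hc).imp not_forall.1 not_forall.1
  obtain ⟨V, hV, w, hwφ, hwψ⟩ := exists_refutation_of_not_medValid hφ hψ
  exact (h (a + b) V hV w).elim hwφ hwψ
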